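/- Under the block-diagonal structure, the truncation bias for the nested-model square-loss gap satisfies ‖Σ (R_γ T_γ(Σ) R_γ − R Σ R) Σ‖_op ≤ γ, where Σ = diag(Σ₁, Σ₋₁), R = blkdiag(Σ₁^{-1},0) − Σ^{-1} = blkdiag(0, Σ₋₁^{-1}), and R_γ = blkdiag(T_γ(Σ₁)^{-1},0) − T_γ(Σ)^{-1} = blkdiag(0, T_γ(Σ₋₁)^{-1}). -/

import Mathlib

/-!
Both corrections `R` and `R_γ` vanish outside the lower-right block, so the bias matrix is
`blkdiag(0, Σ₋₁ T_γ(Σ₋₁)⁻¹ Σ₋₁ − Σ₋₁)`. In the eigenbasis of `Σ₋₁` this block is diagonal with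
entries `λ² / max(λ, γ) − λ`, which lie in `[−γ/4, 0]` since `λ ≥ 0`; and conjugating by a matrix
with orthonormal columns does not increase the operator norm.
-/

open Matrix

/-- Operator (spectral) norm of a real square matrix. -/
noncomputable def opNorm {n : Type*} [Fintype n] [DecidableEq n]
    (A : Matrix n n ℝ) : ℝ :=
  ‖(Matrix.toEuclideanCLM (𝕜 := ℝ) (n := n) A :
      EuclideanSpace ℝ n →L[ℝ] EuclideanSpace ℝ n)‖

/-- Eigenvalue thresholding: replace each eigenvalue `lam k` by `max (lam k) γ`. -/
noncomputable def threshold {n : Type*} [Fintype n] [DecidableEq n]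
    (U : Matrix n n ℝ) (lam : n → ℝ) (γ : ℝ) : Matrix n n ℝ :=
  U * Matrix.diagonal (fun k => max (lam k) γ) * Uᵀ

open scoped Matrix.Norms.L2Operator

theorem abs_mul_inv_max_mul_sub_le {l γ : ℝ} (hl : 0 ≤ l) (hγ : 0 ≤ γ) :
    |l * (max l γ)⁻¹ * l - l| ≤ γ := by
  rcases hl.eq_or_lt with rfl | hl
  · simpa using hγ
  rcases le_total γ l with h | h
  · rwa [max_eq_left h, mul_inv_cancel₀ hl.ne', one_mul, sub_self, abs_zero]
  · have hγ : 0 < γ := hl.trans_le h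
    have hsq : l * γ⁻¹ * l ≤ l := by
      rw [mul_right_comm, ← div_eq_mul_inv, div_le_iff₀ hγ]
      nlinarith
    rw [max_eq_right h, abs_le]
    constructor <;> nlinarith [mul_nonneg (mul_nonneg hl.le (inv_nonneg.2 hγ.le)) hl.le]

namespace Matrix

section L2

variable {m n : Type*} [Fintype m] [Fintype n] [DecidableEq n]

theorem l2_opNorm_le_one_of_transpose_mul_self_eq_one {P : Matrix m n ℝ} (hP : Pᵀ * P = 1) :
    ‖P‖ ≤ 1 := by
  have hsq : ‖P‖ * ‖P‖ ≤ 1 := by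
    rw [← l2_opNorm_conjTranspose_mul_self, conjTranspose_eq_transpose_of_trivial, hP,
      ← l2_opNorm_toEuclideanCLM, map_one]
    exact ContinuousLinearMap.norm_id_le
  nlinarith [norm_nonneg P]

theorem l2_opNorm_mul_mul_transpose_le [DecidableEq m] {P : Matrix m n ℝ} (hP : Pᵀ * P = 1)
    (A : Matrix n n ℝ) : ‖P * A * Pᵀ‖ ≤ ‖A‖ := by
  have hPt : ‖Pᵀ‖ ≤ 1 := by
    rw [← conjTranspose_eq_transpose_of_trivial, l2_opNorm_conjTranspose]
    exact l2_opNorm_le_one_of_transpose_mul_self_eq_one hP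
  calc ‖P * A * Pᵀ‖ ≤ ‖P‖ * ‖A‖ * ‖Pᵀ‖ :=
        (l2_opNorm_mul _ _).trans (by gcongr; exact l2_opNorm_mul _ _)
    _ ≤ 1 * ‖A‖ * 1 := by
        gcongr
        exact l2_opNorm_le_one_of_transpose_mul_self_eq_one hP
    _ = ‖A‖ := by ring

end L2

theorem fromBlocks_zero_zero_zero_conj {m n : Type*} [Fintype n] (U A : Matrix n n ℝ) :
    fromBlocks (0 : Matrix m m ℝ) 0 0 (U * A * Uᵀ) =
      fromRows (0 : Matrix m n ℝ) U * A * (fromRows (0 : Matrix m n ℝ) U)ᵀ := by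
  ext (i | i) (j | j) <;> simp [transpose_fromRows, fromRows_mul]

section OrthogonalConj

variable {n : Type*} [Fintype n] [DecidableEq n] {U : Matrix n n ℝ}

theorem conj_diagonal_mul_conj_diagonal (hU : U ∈ orthogonalGroup n ℝ) (a b : n → ℝ) :
    U * diagonal a * Uᵀ * (U * diagonal b * Uᵀ) = U * diagonal (a * b) * Uᵀ := by
  have hUU : Uᵀ * U = 1 := (mem_orthogonalGroup_iff' n ℝ).1 hU
  calc U * diagonal a * Uᵀ * (U * diagonal b * Uᵀ)
      = U * diagonal a * (Uᵀ * U) * diagonal b * Uᵀ := by simp only [Matrix.mul_assoc]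
    _ = U * diagonal (a * b) * Uᵀ := by
      rw [hUU, Matrix.mul_one, Matrix.mul_assoc U, diagonal_mul_diagonal]
      rfl

theorem conj_diagonal_mul_conj_diagonal_inv (hU : U ∈ orthogonalGroup n ℝ) {a : n → ℝ}
    (ha : ∀ k, a k ≠ 0) : U * diagonal a * Uᵀ * (U * diagonal a⁻¹ * Uᵀ) = 1 := by
  have haa : a * a⁻¹ = fun _ => 1 := funext fun k => mul_inv_cancel₀ (ha k)
  rw [conj_diagonal_mul_conj_diagonal hU, haa, diagonal_one, Matrix.mul_one,
    (mem_orthogonalGroup_iff n ℝ).1 hU]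

theorem inv_conj_diagonal (hU : U ∈ orthogonalGroup n ℝ) {a : n → ℝ} (ha : ∀ k, a k ≠ 0) :
    (U * diagonal a * Uᵀ)⁻¹ = U * diagonal a⁻¹ * Uᵀ :=
  inv_eq_right_inv (conj_diagonal_mul_conj_diagonal_inv hU ha)

theorem isUnit_conj_diagonal (hU : U ∈ orthogonalGroup n ℝ) {a : n → ℝ} (ha : ∀ k, a k ≠ 0) :
    IsUnit (U * diagonal a * Uᵀ) :=
  (isUnit_iff_isUnit_det _).2 <|
    isUnit_det_of_right_inverse (conj_diagonal_mul_conj_diagonal_inv hU ha)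

theorem nonneg_of_posSemidef_conj_diagonal (hU : U ∈ orthogonalGroup n ℝ) {a : n → ℝ}
    (ha : (U * diagonal a * Uᵀ).PosSemidef) (k : n) : 0 ≤ a k := by
  have hUU : Uᵀ * U = 1 := (mem_orthogonalGroup_iff' n ℝ).1 hU
  have hconj : Uᴴ * (U * diagonal a * Uᵀ) * U = diagonal a := by
    rw [conjTranspose_eq_transpose_of_trivial]
    simp only [← Matrix.mul_assoc, hUU, Matrix.one_mul]
    rw [Matrix.mul_assoc, hUU, Matrix.mul_one]
  have hdiag := ha.conjTranspose_mul_mul_same U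
  rw [hconj] at hdiag
  exact posSemidef_diagonal_iff.1 hdiag k

variable {lam : n → ℝ} {γ : ℝ}

theorem isUnit_threshold (hU : U ∈ orthogonalGroup n ℝ) (hγ : 0 < γ) :
    IsUnit (threshold U lam γ) :=
  isUnit_conj_diagonal hU fun _ => (hγ.trans_le (le_max_right _ _)).ne'

theorem conj_diagonal_mul_inv_threshold_mul_sub (hU : U ∈ orthogonalGroup n ℝ) (hγ : 0 < γ) :
    U * diagonal lam * Uᵀ * (threshold U lam γ)⁻¹ * (U * diagonal lam * Uᵀ) -
        U * diagonal lam * Uᵀ =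
      U * diagonal (fun k => lam k * (max (lam k) γ)⁻¹ * lam k - lam k) * Uᵀ := by
  rw [threshold, inv_conj_diagonal hU fun _ => (hγ.trans_le (le_max_right _ _)).ne',
    conj_diagonal_mul_conj_diagonal hU, conj_diagonal_mul_conj_diagonal hU, ← Matrix.sub_mul,
    ← Matrix.mul_sub, ← diagonal_sub]
  rfl

end OrthogonalConj

theorem fromBlocks_inv_sub_inv_fromBlocks {m n α : Type*} [Fintype m] [DecidableEq m]
    [Fintype n] [DecidableEq n] [CommRing α] {A : Matrix m m α} {D : Matrix n n α}
    (hA : IsUnit A) (hD : IsUnit D) :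
    fromBlocks A⁻¹ 0 0 0 - (fromBlocks A 0 0 D)⁻¹ = fromBlocks 0 0 0 (-D⁻¹) := by
  rw [inv_fromBlocks_zero₁₂_of_isUnit_iff _ _ _ (iff_of_true hA hD), sub_eq_add_neg,
    fromBlocks_neg, fromBlocks_add]
  simp

theorem fromBlocks_nestedGap_eq {m n α : Type*} [Fintype m] [DecidableEq m]
    [Fintype n] [DecidableEq n] [CommRing α] {A B : Matrix m m α} {D E : Matrix n n α}
    (hA : IsUnit A) (hB : IsUnit B) (hD : IsUnit D) (hE : IsUnit E) :
    fromBlocks A 0 0 D *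
        ((fromBlocks B⁻¹ 0 0 0 - (fromBlocks B 0 0 E)⁻¹) * fromBlocks B 0 0 E *
            (fromBlocks B⁻¹ 0 0 0 - (fromBlocks B 0 0 E)⁻¹) -
          (fromBlocks A⁻¹ 0 0 0 - (fromBlocks A 0 0 D)⁻¹) * fromBlocks A 0 0 D *
            (fromBlocks A⁻¹ 0 0 0 - (fromBlocks A 0 0 D)⁻¹)) *
        fromBlocks A 0 0 D =
      fromBlocks 0 0 0 (D * E⁻¹ * D - D) := by
  have hDdet := (isUnit_iff_isUnit_det D).1 hD
  rw [fromBlocks_inv_sub_inv_fromBlocks hB hE, fromBlocks_inv_sub_inv_fromBlocks hA hD]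
  simp only [fromBlocks_multiply, sub_eq_add_neg, fromBlocks_neg, fromBlocks_add,
    Matrix.zero_mul, Matrix.mul_zero, add_zero, zero_add, neg_zero, Matrix.neg_mul,
    Matrix.mul_neg, neg_neg, nonsing_inv_mul _ ((isUnit_iff_isUnit_det E).1 hE),
    nonsing_inv_mul _ hDdet, Matrix.one_mul]
  rw [Matrix.mul_add, Matrix.add_mul, Matrix.mul_neg, Matrix.neg_mul, mul_nonsing_inv _ hDdet,
    Matrix.one_mul]

end Matrix

theorem block_diagonal_truncation_bias_general {d₁ d₂ : ℕ}
    (S1 U1 : Matrix (Fin d₁) (Fin d₁) ℝ) (Sm1 U2 : Matrix (Fin d₂) (Fin d₂) ℝ)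
    (lam1 : Fin d₁ → ℝ) (lam2 : Fin d₂ → ℝ) (γ : ℝ) (hγ : 0 < γ)
    (hS1 : S1.PosDef) (hSm1 : Sm1.PosDef)
    (hU1 : U1 ∈ Matrix.orthogonalGroup (Fin d₁) ℝ)
    (hU2 : U2 ∈ Matrix.orthogonalGroup (Fin d₂) ℝ)
    (hdecomp2 : Sm1 = U2 * Matrix.diagonal lam2 * U2ᵀ) :
    opNorm (Matrix.fromBlocks S1 0 0 Sm1 *
        ((Matrix.fromBlocks (threshold U1 lam1 γ)⁻¹ 0 0 0 -
            (Matrix.fromBlocks (threshold U1 lam1 γ) 0 0 (threshold U2 lam2 γ))⁻¹) *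
          Matrix.fromBlocks (threshold U1 lam1 γ) 0 0 (threshold U2 lam2 γ) *
          (Matrix.fromBlocks (threshold U1 lam1 γ)⁻¹ 0 0 0 -
            (Matrix.fromBlocks (threshold U1 lam1 γ) 0 0 (threshold U2 lam2 γ))⁻¹) -
          (Matrix.fromBlocks S1⁻¹ 0 0 0 - (Matrix.fromBlocks S1 0 0 Sm1)⁻¹) *
            Matrix.fromBlocks S1 0 0 Sm1 *
            (Matrix.fromBlocks S1⁻¹ 0 0 0 - (Matrix.fromBlocks S1 0 0 Sm1)⁻¹)) *
        Matrix.fromBlocks S1 0 0 Sm1) ≤ γ := by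
  rw [fromBlocks_nestedGap_eq hS1.isUnit (isUnit_threshold hU1 hγ) hSm1.isUnit
    (isUnit_threshold hU2 hγ), hdecomp2, conj_diagonal_mul_inv_threshold_mul_sub hU2 hγ,
    fromBlocks_zero_zero_zero_conj]
  refine (l2_opNorm_mul_mul_transpose_le ?_ _).trans ?_
  · rw [transpose_fromRows, fromCols_mul_fromRows]
    simpa using (mem_orthogonalGroup_iff' _ ℝ).1 hU2
  · rw [l2_opNorm_diagonal, pi_norm_le_iff_of_nonneg hγ.le]
    intro k
    exact abs_mul_inv_max_mul_sub_le
      (nonneg_of_posSemidef_conj_diagonal hU2 (hdecomp2 ▸ hSm1.posSemidef) k) hγ.le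

/-- Under block-diagonal structure `Σ = blkdiag(Σ₁, Σ₋₁)`, the truncation bias for the
nested-model square-loss gap satisfies `‖Σ (R_γ T_γ(Σ) R_γ − R Σ R) Σ‖_op ≤ γ`, where
`R = blkdiag(Σ₁⁻¹,0) − Σ⁻¹` and `R_γ = blkdiag(T_γ(Σ₁)⁻¹,0) − T_γ(Σ)⁻¹`, and
`T_γ(Σ) = blkdiag(T_γ(Σ₁), T_γ(Σ₋₁))`. -/
theorem block_diagonal_truncation_bias {d₁ d₂ : ℕ}
    (S1 U1 : Matrix (Fin d₁) (Fin d₁) ℝ) (Sm1 U2 : Matrix (Fin d₂) (Fin d₂) ℝ)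
    (lam1 : Fin d₁ → ℝ) (lam2 : Fin d₂ → ℝ) (γ : ℝ) (hγ : 0 < γ)
    (hS1 : S1.PosDef) (hSm1 : Sm1.PosDef)
    (hU1 : U1 ∈ Matrix.orthogonalGroup (Fin d₁) ℝ)
    (hU2 : U2 ∈ Matrix.orthogonalGroup (Fin d₂) ℝ)
    (hdecomp1 : S1 = U1 * Matrix.diagonal lam1 * U1ᵀ)
    (hdecomp2 : Sm1 = U2 * Matrix.diagonal lam2 * U2ᵀ) :
    opNorm (Matrix.fromBlocks S1 0 0 Sm1 *
        ((Matrix.fromBlocks (threshold U1 lam1 γ)⁻¹ 0 0 0 -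
            (Matrix.fromBlocks (threshold U1 lam1 γ) 0 0 (threshold U2 lam2 γ))⁻¹) *
          Matrix.fromBlocks (threshold U1 lam1 γ) 0 0 (threshold U2 lam2 γ) *
          (Matrix.fromBlocks (threshold U1 lam1 γ)⁻¹ 0 0 0 -
            (Matrix.fromBlocks (threshold U1 lam1 γ) 0 0 (threshold U2 lam2 γ))⁻¹) -
          (Matrix.fromBlocks S1⁻¹ 0 0 0 - (Matrix.fromBlocks S1 0 0 Sm1)⁻¹) *
            Matrix.fromBlocks S1 0 0 Sm1 *
            (Matrix.fromBlocks S1⁻¹ 0 0 0 - (Matrix.fromBlocks S1 0 0 Sm1)⁻¹)) *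
        Matrix.fromBlocks S1 0 0 Sm1) ≤ γ :=
  block_diagonal_truncation_bias_general S1 U1 Sm1 U2 lam1 lam2 γ hγ hS1 hSm1 hU1 hU2 hdecomp2
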